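/- arXiv:1903.09619 — 3 statements merged into one kernel-verified Lean document; each statement's English description precedes it below -/
import Mathlib

section
/- Let n > 1 be a natural number. Then H(n) equals the 2-adic valuation of n, plus the sum over all odd primes p dividing n of (the multiplicity of p in n) times (H(p) - 1), plus 1 if n is odd (and plus 0 if n is even). Equivalently, writing n = 2^α · p₁^{α₁} ⋯ p_r^{α_r} with p₁, …, p_r distinct odd primes and α, αᵢ ≥ 0: if α > 0 then H(n) = α + Σᵢ αᵢ(H(pᵢ) − 1), and if α = 0 then H(n) = Σᵢ αᵢ(H(pᵢ) − 1) + 1. -/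
/-- The height function: H(1) = 0 and H(n) = H(φ(n)) + 1 for n ≥ 2. -/
def H : ℕ → ℕ
  | 0 => 0
  | 1 => 0
  | n + 2 => H (Nat.totient (n + 2)) + 1
  decreasing_by exact Nat.totient_lt _ (by omega)

/-- The sum-of-heights function S(n) = ∑_{k=1}^n H(k). -/
def S (n : ℕ) : ℕ := ∑ k ∈ Finset.Icc 1 n, H k

/-!
Let `A` be the completely additive function with `A 2 = 1` and `A p = H p - 1` for odd primes `p`.
Euler's product formula gives `A (φ n) + ∑_{p ∣ n} A p = A n + ∑_{p ∣ n} A (p - 1)`. For odd `p`,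
`A (p - 1) = H (p - 1) = H p - 1 = A p` by induction, while `A 2 - A 1 = 1`; hence
`A (φ n) + [2 ∣ n] = A n`. As `φ n` is even for `n > 2`, strong induction on `n` then gives
`H n = A n + [n odd]` for all `n ≥ 2`; it fails at `n = 1`, which is why `n = 2` (the only `n ≥ 2`
with `φ n = 1`) is the base case.
-/

namespace Nat

section AdditiveExtension

variable {M : Type*} [AddCommMonoid M] (w : ℕ → M)

def additiveExtension (n : ℕ) : M := n.factorization.sum fun p k => k • w p

theorem additiveExtension_eq_sum_primeFactors (n : ℕ) :
    additiveExtension w n = ∑ p ∈ n.primeFactors, n.factorization p • w p := by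
  rw [additiveExtension, Finsupp.sum, support_factorization]

@[simp]
theorem additiveExtension_one : additiveExtension w 1 = 0 := by
  simp [additiveExtension]

theorem additiveExtension_mul {m n : ℕ} (hm : m ≠ 0) (hn : n ≠ 0) :
    additiveExtension w (m * n) = additiveExtension w m + additiveExtension w n := by
  rw [additiveExtension, factorization_mul hm hn,
    Finsupp.sum_add_index' (fun p => zero_smul ℕ (w p)) fun p _ _ => add_smul _ _ (w p)]
  rfl

theorem additiveExtension_prime_pow {p : ℕ} (hp : p.Prime) (k : ℕ) :
    additiveExtension w (p ^ k) = k • w p := by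
  rw [additiveExtension, hp.factorization_pow, Finsupp.sum_single_index (zero_smul ℕ (w p))]

theorem additiveExtension_prime {p : ℕ} (hp : p.Prime) : additiveExtension w p = w p := by
  simpa using additiveExtension_prime_pow w hp 1

theorem additiveExtension_prod {ι : Type*} {s : Finset ι} {f : ι → ℕ} (hf : ∀ i ∈ s, f i ≠ 0) :
    additiveExtension w (∏ i ∈ s, f i) = ∑ i ∈ s, additiveExtension w (f i) := by
  classical
  induction s using Finset.induction_on with
  | empty => simp
  | insert i s hi ih =>
    have hs : ∀ j ∈ s, f j ≠ 0 := fun j hj => hf j (Finset.mem_insert_of_mem hj)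
    rw [Finset.prod_insert hi, Finset.sum_insert hi, additiveExtension_mul w
      (hf i (Finset.mem_insert_self i s)) (Finset.prod_ne_zero_iff.mpr hs), ih hs]

theorem additiveExtension_totient_add {n : ℕ} (hn : n ≠ 0) :
    additiveExtension w (φ n) + ∑ p ∈ n.primeFactors, w p =
      additiveExtension w n + ∑ p ∈ n.primeFactors, additiveExtension w (p - 1) := by
  have hprod : φ n = ∏ p ∈ n.primeFactors, p ^ (n.factorization p - 1) * (p - 1) := by
    rw [totient_eq_prod_factorization hn, Finsupp.prod, support_factorization]
  rw [hprod, additiveExtension_prod, additiveExtension_eq_sum_primeFactors,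
    ← Finset.sum_add_distrib, ← Finset.sum_add_distrib]
  · refine Finset.sum_congr rfl fun p hp => ?_
    have hpp := prime_of_mem_primeFactors hp
    obtain ⟨k, hk⟩ : ∃ k, n.factorization p = k + 1 :=
      exists_eq_add_one.mpr (hpp.factorization_pos_of_dvd hn (dvd_of_mem_primeFactors hp))
    rw [additiveExtension_mul w (pow_ne_zero _ hpp.ne_zero) (sub_ne_zero_of_lt hpp.one_lt),
      additiveExtension_prime_pow w hpp, hk, add_tsub_cancel_right, succ_nsmul]
    abel
  · intro p hp
    have hpp := prime_of_mem_primeFactors hp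
    exact mul_ne_zero (pow_ne_zero _ hpp.ne_zero) (sub_ne_zero_of_lt hpp.one_lt)

end AdditiveExtension

end Nat

open Nat

theorem H_one : H 1 = 0 := by rw [H]

theorem H_of_two_le {n : ℕ} (hn : 2 ≤ n) : H n = H (φ n) + 1 := by
  obtain ⟨k, rfl⟩ := Nat.exists_eq_add_of_le' hn
  rw [H]

theorem H_two : H 2 = 1 := by rw [H_of_two_le le_rfl, totient_two, H_one]

def heightWeight (p : ℕ) : ℕ := if p = 2 then 1 else H p - 1

theorem additiveExtension_heightWeight_totient_add {n : ℕ} (hn : n ≠ 0)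
    (hodd : ∀ p ∈ n.primeFactors, p ≠ 2 → additiveExtension heightWeight (p - 1) = H p - 1) :
    additiveExtension heightWeight (φ n) + (if 2 ∣ n then 1 else 0) =
      additiveExtension heightWeight n := by
  have hweight : ∀ p ∈ n.primeFactors,
      heightWeight p = additiveExtension heightWeight (p - 1) + if p = 2 then 1 else 0 := by
    intro p hp
    by_cases hp2 : p = 2
    · simp [hp2, heightWeight]
    · rw [heightWeight, if_neg hp2, if_neg hp2, hodd p hp hp2, add_zero]
  have htot := additiveExtension_totient_add heightWeight hn
  rw [Finset.sum_congr rfl hweight, Finset.sum_add_distrib, Finset.sum_ite_eq', ← add_assoc,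
    add_right_comm, add_left_inj] at htot
  simpa [mem_primeFactors, hn, prime_two] using htot

theorem H_eq_additiveExtension_heightWeight {n : ℕ} (hn : 2 ≤ n) :
    H n = additiveExtension heightWeight n + if Odd n then 1 else 0 := by
  induction n using Nat.strong_induction_on with
  | _ n ih =>
  obtain rfl | hn3 := hn.eq_or_lt
  · rw [H_two, additiveExtension_prime heightWeight prime_two]
    decide
  have hodd : ∀ p ∈ n.primeFactors, p ≠ 2 → additiveExtension heightWeight (p - 1) = H p - 1 := by
    intro p hp hp2
    have hpp := prime_of_mem_primeFactors hp
    have hp3 : 2 < p := hpp.two_le.lt_of_ne' hp2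
    have heven : ¬ Odd (p - 1) :=
      not_odd_iff_even.mpr (Nat.Odd.sub_odd (hpp.odd_of_ne_two hp2) odd_one)
    rw [H_of_two_le hpp.two_le, totient_prime hpp, add_tsub_cancel_right,
      ih (p - 1) (by have := le_of_mem_primeFactors hp; omega) (by omega), if_neg heven, add_zero]
  have heven_totient := totient_even hn3
  have two_le_totient : 2 ≤ φ n := by
    have := totient_pos.mpr (by omega : 0 < n)
    obtain ⟨k, hk⟩ := heven_totient
    omega
  rw [H_of_two_le hn, ih (φ n) (totient_lt n (by omega)) two_le_totient,
    if_neg (not_odd_iff_even.mpr heven_totient),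
    ← additiveExtension_heightWeight_totient_add (by omega) hodd]
  rcases n.even_or_odd with he | ho
  · rw [if_pos he.two_dvd, if_neg (not_odd_iff_even.mpr he)]
  · rw [if_neg (not_even_iff_odd.mpr ho ∘ even_iff_two_dvd.mpr), if_pos ho]

theorem additiveExtension_heightWeight (n : ℕ) :
    additiveExtension heightWeight n = n.factorization 2
      + ∑ p ∈ n.primeFactors.filter (fun p => p ≠ 2), n.factorization p * (H p - 1) := by
  rw [additiveExtension_eq_sum_primeFactors]
  simp only [heightWeight, smul_eq_mul, mul_ite, mul_one]
  rw [Finset.sum_ite, Finset.filter_eq']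
  congr 1
  split_ifs with h2
  · exact Finset.sum_singleton _ _
  · rwa [Finset.sum_empty, eq_comm, ← Finsupp.notMem_support_iff, support_factorization]

theorem shapiro_height_formula (n : ℕ) (hn : 1 < n) :
    H n = n.factorization 2
        + ∑ p ∈ n.primeFactors.filter (fun p => p ≠ 2),
            n.factorization p * (H p - 1)
        + (if Odd n then 1 else 0) := by
  rw [H_eq_additiveExtension_heightWeight hn, additiveExtension_heightWeight]
end

section
/- If p is an odd prime with H(p) = k (so that k ≥ 2), then p ≤ 2·3^{k−2} + 1. -/
/-!
The map `n ↦ H (2 * n) - 1` is Shapiro's completely additive function: it is `1` at `2` and takes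
the same value at an odd prime `q` as at `q - 1`. Additivity is proved prime by prime, by strong
induction, using `φ (q * n) = q * φ n` when `q ∣ n` and `φ (q * n) = (q - 1) * φ n` otherwise.
Multiplying out, `3 * n ≤ 3 ^ H (2 * n)`, since an odd prime `q = 2 r + 1` satisfies
`3 * q ≤ 9 * r`. For an odd prime `p = 2 r + 1` we have `H p = H (2 * r) + 1`, which gives the bound.
-/

open Nat

theorem H_eq_H_totient_add_one {n : ℕ} (hn : 1 < n) : H n = H (φ n) + 1 := by
  obtain ⟨n, rfl⟩ : ∃ m, n = m + 2 := ⟨n - 2, by omega⟩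
  rw [H]

theorem H_four : H (2 * 2) = 2 := by
  rw [H_eq_H_totient_add_one (by norm_num), show φ (2 * 2) = 2 by decide, H_two]

theorem H_prime {p : ℕ} (hp : p.Prime) : H p = H (p - 1) + 1 := by
  rw [H_eq_H_totient_add_one hp.one_lt, totient_prime hp]

theorem H_two_mul_of_odd {n : ℕ} (hn : Odd n) (h1 : 1 < n) : H (2 * n) = H n := by
  rw [H_eq_H_totient_add_one (by omega), totient_mul (coprime_two_left.mpr hn), totient_two,
    one_mul, ← H_eq_H_totient_add_one h1]

theorem exists_totient_eq_two_mul {n : ℕ} (hn : 2 < n) : ∃ c, 0 < c ∧ φ n = 2 * c := by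
  obtain ⟨c, hc⟩ := totient_even hn
  have := totient_pos.mpr (by omega : 0 < n)
  exact ⟨c, by omega, by omega⟩

def IsHeightAdditive (n : ℕ) : Prop :=
  ∀ m, 0 < m → H (2 * (n * m)) + 1 = H (2 * n) + H (2 * m)

theorem isHeightAdditive_one : IsHeightAdditive 1 := by
  intro m _
  rw [one_mul, mul_one, H_two, add_comm]

theorem IsHeightAdditive.mul {a b : ℕ} (ha : IsHeightAdditive a) (hb : IsHeightAdditive b)
    (hb0 : 0 < b) : IsHeightAdditive (a * b) := by
  intro m hm
  have hbm := hb m hm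
  have habm := ha (b * m) (by positivity)
  have hab := ha b hb0
  rw [mul_assoc] at *
  omega

theorem Nat.Prime.isHeightAdditive {q : ℕ} (hq : q.Prime)
    (ih : ∀ a, 0 < a → a < q → IsHeightAdditive a) : IsHeightAdditive q := by
  intro m hm
  induction m using Nat.strong_induction_on with
  | _ m ihm =>
  rcases (by omega : m = 1 ∨ 1 < m) with rfl | hm1
  · rw [mul_one, H_two]
  obtain ⟨c, hc0, hc⟩ := exists_totient_eq_two_mul (by omega : 2 < 2 * m)
  have hcm : c < m := by have := totient_lt (2 * m) (by omega); omega
  have h2m : H (2 * m) = H (2 * c) + 1 := by rw [H_eq_H_totient_add_one (by omega), hc]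
  have hqm : 1 < 2 * (q * m) := by nlinarith [hq.two_le]
  rw [H_eq_H_totient_add_one hqm, mul_left_comm]
  by_cases hdvd : q ∣ 2 * m
  · rw [totient_mul_of_prime_of_dvd hq hdvd, hc, mul_left_comm]
    have := ihm c hcm hc0
    omega
  · obtain ⟨r, rfl⟩ := hq.odd_of_ne_two (by rintro rfl; exact hdvd (dvd_mul_right 2 m))
    have hr0 : 0 < r := by have := hq.two_le; omega
    have h2q : H (2 * (2 * r + 1)) = H (2 * r) + 1 := by
      rw [H_two_mul_of_odd ⟨r, rfl⟩ (by omega), H_prime hq, add_tsub_cancel_right]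
    -- additivity at `2` is doubling: `H (2 * x) = H x + 1` for even `x`
    have h4c := ih 2 two_pos (by omega) c hc0
    rw [H_four] at h4c
    rw [totient_mul (hq.coprime_iff_not_dvd.mpr hdvd), totient_prime hq, hc, add_tsub_cancel_right,
      mul_assoc]
    have := ih r hr0 (by omega) (2 * c) (by omega)
    omega

theorem isHeightAdditive {n : ℕ} (hn : 0 < n) : IsHeightAdditive n := by
  induction n using Nat.strong_induction_on with
  | _ n ih =>
  rcases (by omega : n = 1 ∨ 1 < n) with rfl | hn1
  · exact isHeightAdditive_one
  by_cases hp : n.Prime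
  · exact hp.isHeightAdditive fun a ha han => ih a han ha
  obtain ⟨a, ⟨b, rfl⟩, ha2, han⟩ := exists_dvd_of_not_prime2 hn1 hp
  have hb : 0 < b := Nat.pos_of_ne_zero (by rintro rfl; simp at hn1)
  exact (ih a han (by omega)).mul (ih b (by nlinarith) hb) hb

theorem three_mul_le_three_pow_H_two_mul (n : ℕ) : 3 * n ≤ 3 ^ H (2 * n) := by
  induction n using Nat.strong_induction_on with
  | _ n ih =>
  rcases (by omega : n = 0 ∨ n = 1 ∨ 1 < n) with rfl | rfl | hn1
  · simp
  · simp [H_two]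
  by_cases hp : n.Prime
  · rcases hp.eq_two_or_odd' with rfl | ⟨r, rfl⟩
    · rw [H_four]; norm_num
    · have := ih r (by omega)
      rw [H_two_mul_of_odd ⟨r, rfl⟩ hn1, H_prime hp, add_tsub_cancel_right, pow_succ]
      omega
  obtain ⟨a, ⟨b, rfl⟩, ha2, han⟩ := exists_dvd_of_not_prime2 hn1 hp
  have hb : 0 < b := Nat.pos_of_ne_zero (by rintro rfl; simp at hn1)
  have hadd := isHeightAdditive (by omega : 0 < a) b hb
  have : 3 * (3 * (a * b)) ≤ 3 * 3 ^ H (2 * (a * b)) :=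
    calc 3 * (3 * (a * b)) = (3 * a) * (3 * b) := by ring
      _ ≤ 3 ^ H (2 * a) * 3 ^ H (2 * b) := Nat.mul_le_mul (ih a han) (ih b (by nlinarith))
      _ = 3 * 3 ^ H (2 * (a * b)) := by rw [← pow_add, ← hadd, pow_succ, mul_comm]
  omega

theorem largest_prime_at_height (p k : ℕ) (hp : p.Prime) (hodd : Odd p)
    (hH : H p = k) : p ≤ 2 * 3 ^ (k - 2) + 1 := by
  obtain ⟨r, rfl⟩ := hodd
  have hr : 0 < r := by have := hp.two_le; omega
  have hbound := three_mul_le_three_pow_H_two_mul r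
  obtain ⟨j, hj⟩ : ∃ j, H (2 * r) = j + 1 :=
    Nat.exists_eq_add_one.mpr (Nat.pos_of_ne_zero fun h => by rw [h] at hbound; omega)
  rw [hj, pow_succ] at hbound
  rw [H_prime hp, add_tsub_cancel_right, hj] at hH
  subst hH
  rw [show j + 1 + 1 - 2 = j by omega]
  omega
end

section
/- Let k > 2. Then the set of natural numbers n with H(n) = k and 4·3^{k−2} < n ≤ 2·3^{k−1} is exactly the set of numbers of the form m = 2·3^{k−a}·p, where 2 ≤ a ≤ k and p = 2·3^{a−2} + 1 is prime. -/
def shapiro (n : ℕ) : ℕ :=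
  (n.primeFactorsList.attach.map fun p => if p.1 = 2 then 1 else shapiro (p.1 - 1)).sum
decreasing_by
  have := Nat.le_of_mem_primeFactorsList p.2
  have := (Nat.prime_of_mem_primeFactorsList p.2).two_le
  omega

lemma shapiro_eq (n : ℕ) :
    shapiro n = (n.primeFactorsList.map fun p => if p = 2 then 1 else shapiro (p - 1)).sum := by
  rw [shapiro]
  exact congrArg List.sum (List.attach_map_val (f := fun p => if p = 2 then 1 else shapiro (p - 1)))

@[simp] lemma shapiro_one : shapiro 1 = 0 := by rw [shapiro_eq]; simp

lemma shapiro_prime {p : ℕ} (hp : p.Prime) :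
    shapiro p = if p = 2 then 1 else shapiro (p - 1) := by
  rw [shapiro_eq, Nat.primeFactorsList_prime hp]; simp

@[simp] lemma shapiro_two : shapiro 2 = 1 := by simp [shapiro_prime Nat.prime_two]

lemma shapiro_prime_of_ne_two {p : ℕ} (hp : p.Prime) (h2 : p ≠ 2) :
    shapiro p = shapiro (p - 1) := by
  simp [shapiro_prime hp, h2]

@[simp] lemma shapiro_three : shapiro 3 = 1 := by
  rw [shapiro_prime_of_ne_two Nat.prime_three (by norm_num)]; simp

lemma shapiro_mul {a b : ℕ} (ha : a ≠ 0) (hb : b ≠ 0) :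
    shapiro (a * b) = shapiro a + shapiro b := by
  rw [shapiro_eq, shapiro_eq a, shapiro_eq b, ← List.sum_append, ← List.map_append]
  exact ((Nat.perm_primeFactorsList_mul ha hb).map _).sum_eq

lemma shapiro_pow {a : ℕ} (ha : a ≠ 0) (e : ℕ) : shapiro (a ^ e) = e * shapiro a := by
  induction e with
  | zero => simp
  | succ e ih => rw [pow_succ, shapiro_mul (pow_ne_zero _ ha) ha, ih, add_one_mul]

lemma shapiro_totient_add_one {n : ℕ} (hn : n ≠ 0) :
    shapiro n.totient + 1 = shapiro n + n % 2 := by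
  induction n using Nat.recOnPosPrimePosCoprime with
  | zero => exact absurd rfl hn
  | one => simp
  | prime_pow p e hp he =>
    rw [Nat.totient_prime_pow hp he, shapiro_mul (pow_ne_zero _ hp.ne_zero)
      (Nat.sub_ne_zero_of_lt hp.one_lt), shapiro_pow hp.ne_zero, shapiro_pow hp.ne_zero]
    obtain rfl | h2 := eq_or_ne p 2
    · rw [Nat.pow_mod, Nat.mod_self, Nat.zero_pow he, Nat.succ_sub_one, shapiro_one, shapiro_two]
      omega
    · obtain ⟨e, rfl⟩ := Nat.exists_eq_add_of_le' he
      rw [Nat.odd_iff.mp (hp.odd_of_ne_two h2).pow, ← shapiro_prime_of_ne_two hp h2,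
        Nat.add_sub_cancel]
      ring
  | coprime a b ha hb hab iha ihb =>
    have hmod : a * b % 2 + 1 = a % 2 + b % 2 := by
      have h2 : ¬ (2 ∣ a ∧ 2 ∣ b) := fun ⟨h2a, h2b⟩ =>
        absurd (Nat.eq_one_of_dvd_one (hab ▸ Nat.dvd_gcd h2a h2b)) (by norm_num)
      rw [Nat.mul_mod]
      rcases Nat.mod_two_eq_zero_or_one a with ha | ha <;>
        rcases Nat.mod_two_eq_zero_or_one b with hb | hb <;>
        simp_all [Nat.dvd_iff_mod_eq_zero]
    rw [Nat.totient_mul hab, shapiro_mul (by positivity) (by positivity),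
      shapiro_mul (by positivity) (by positivity)]
    have := iha (by positivity)
    have := ihb (by positivity)
    omega

lemma H_eq_shapiro_add_mod_two {n : ℕ} (hn : 2 ≤ n) : H n = shapiro n + n % 2 := by
  induction n using Nat.strong_induction_on with
  | _ n ih =>
  obtain ⟨m, rfl⟩ := Nat.exists_eq_add_of_le' hn
  rcases Nat.eq_zero_or_pos m with rfl | hm
  · simp [H]
  have hφ : 2 ≤ (m + 2).totient ∧ (m + 2).totient % 2 = 0 := by
    have := Nat.totient_even (n := m + 2) (by omega)
    have := Nat.totient_pos.mpr (show 0 < m + 2 by omega)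
    grind
  rw [H, ih _ (Nat.totient_lt _ (by omega)) hφ.1, hφ.2, add_zero,
    shapiro_totient_add_one (by omega)]

lemma le_three_pow_shapiro {n : ℕ} (hn : n ≠ 0) : n ≤ 3 ^ shapiro n := by
  induction n using Nat.strong_induction_on with
  | _ n ih =>
  rcases lt_or_ge n 2 with hn1 | hn2
  · interval_cases n <;> simp_all
  by_cases hp : n.Prime
  · obtain rfl | h2 := eq_or_ne n 2
    · simp
    obtain ⟨m, rfl⟩ := hp.odd_of_ne_two h2
    have hm : m ≠ 0 := by rintro rfl; exact Nat.not_prime_one hp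
    rw [shapiro_prime_of_ne_two hp h2, Nat.add_sub_cancel, shapiro_mul two_ne_zero hm, shapiro_two,
      pow_add, pow_one]
    have := ih m (by omega) hm
    omega
  · obtain ⟨a, ⟨b, rfl⟩, ha2, hlt⟩ := Nat.exists_dvd_of_not_prime2 hn2 hp
    have hb : b ≠ 0 := by rintro rfl; simp at hn
    rw [shapiro_mul (by omega) hb, pow_add]
    exact Nat.mul_le_mul (ih a hlt (by omega)) (ih b (by nlinarith) hb)

lemma three_pow_mul_le_of_two_pow_dvd {n t : ℕ} (hn : n ≠ 0) (h : 2 ^ t ∣ n) :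
    3 ^ t * n ≤ 2 ^ t * 3 ^ shapiro n := by
  obtain ⟨m, rfl⟩ := h
  have hm : m ≠ 0 := right_ne_zero_of_mul hn
  rw [shapiro_mul (by positivity) hm, shapiro_pow two_ne_zero, shapiro_two, mul_one, pow_add]
  calc 3 ^ t * (2 ^ t * m) = 2 ^ t * 3 ^ t * m := by ring
    _ ≤ 2 ^ t * 3 ^ t * 3 ^ shapiro m := by gcongr; exact le_three_pow_shapiro hm
    _ = 2 ^ t * (3 ^ t * 3 ^ shapiro m) := by ring

lemma Nat.Prime.three_mul_sub_one_le {p : ℕ} (hp : p.Prime) (h2 : p ≠ 2) :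
    3 * (p - 1) ≤ 2 * 3 ^ shapiro p := by
  rw [shapiro_prime_of_ne_two hp h2]
  simpa using three_pow_mul_le_of_two_pow_dvd (t := 1) (by have := hp.two_le; omega)
    (hp.even_sub_one h2).two_dvd

lemma Nat.Prime.eq_two_mul_three_pow_add_one {p : ℕ} (hp : p.Prime) (h2 : p ≠ 2)
    (h : 2 * 3 ^ shapiro p < 3 * p) : p = 2 * 3 ^ (shapiro p - 1) + 1 := by
  have hle := hp.three_mul_sub_one_le h2
  have hpos : shapiro p ≠ 0 := by
    intro h0
    rw [h0] at hle
    have := hp.two_le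
    omega
  obtain ⟨s, hs⟩ := Nat.exists_eq_succ_of_ne_zero hpos
  rw [hs, pow_succ] at hle h
  rw [hs, Nat.succ_sub_one]
  have := hp.two_le
  omega

lemma shapiro_two_mul_three_pow_add_one {b : ℕ} (hp : (2 * 3 ^ b + 1).Prime) :
    shapiro (2 * 3 ^ b + 1) = b + 1 := by
  rw [shapiro_prime_of_ne_two hp (by omega), Nat.add_sub_cancel,
    shapiro_mul two_ne_zero (by positivity), shapiro_pow three_ne_zero]
  simp [add_comm]

lemma nine_mul_le_seven_mul_three_pow_shapiro {n : ℕ} (hn : n ≠ 1) (h2 : ¬ 2 ∣ n)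
    (h3 : ¬ 3 ∣ n) :
    9 * n ≤ 7 * 3 ^ shapiro n := by
  have hn0 : n ≠ 0 := by rintro rfl; exact h2 (dvd_zero 2)
  set q := n.minFac
  have hq : q.Prime := Nat.minFac_prime hn
  obtain ⟨m, hm⟩ := n.minFac_dvd
  have hm0 : m ≠ 0 := by rintro rfl; exact hn0 (by rw [hm, mul_zero])
  have hq5 : 5 ≤ q := by
    have := hq.two_le
    have : q ≠ 2 := fun h => h2 (h ▸ n.minFac_dvd)
    have : q ≠ 3 := fun h => h3 (h ▸ n.minFac_dvd)
    have : q ≠ 4 := by rintro h; rw [h] at hq; norm_num at hq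
    omega
  have hq' : 9 * q ≤ 7 * 3 ^ shapiro q := by
    have hle := hq.three_mul_sub_one_le (by omega)
    have h3q : 3 ^ 1 < 3 ^ shapiro q := by omega
    have h9q : 3 ^ 2 ≤ 3 ^ shapiro q :=
      Nat.pow_le_pow_right (by norm_num) ((Nat.pow_lt_pow_iff_right (by norm_num)).mp h3q)
    omega
  rw [hm, shapiro_mul hq.ne_zero hm0, pow_add]
  calc 9 * (q * m) = 9 * q * m := by ring
    _ ≤ 7 * 3 ^ shapiro q * 3 ^ shapiro m := by gcongr; exact le_three_pow_shapiro hm0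
    _ = 7 * (3 ^ shapiro q * 3 ^ shapiro m) := by ring

lemma exists_eq_three_pow_mul_prime_of_two_mul_three_pow_lt {m : ℕ} (hm1 : m ≠ 1)
    (h2 : ¬ 2 ∣ m) (h : 2 * 3 ^ shapiro m < 3 * m) :
    ∃ j b, (2 * 3 ^ b + 1).Prime ∧ m = 3 ^ j * (2 * 3 ^ b + 1) := by
  have hm0 : m ≠ 0 := by rintro rfl; exact h2 (dvd_zero 2)
  obtain ⟨j, r, h3r, rfl⟩ := Nat.exists_eq_pow_mul_and_not_dvd hm0 3 (by norm_num)
  have hr0 : r ≠ 0 := right_ne_zero_of_mul hm0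
  have h2r : ¬ 2 ∣ r := fun h => h2 (h.mul_left _)
  rw [shapiro_mul (by positivity) hr0, shapiro_pow three_ne_zero, shapiro_three, mul_one,
    pow_add] at h
  have hr : 2 * 3 ^ shapiro r < 3 * r :=
    Nat.lt_of_mul_lt_mul_left (a := 3 ^ j) (by linarith)
  rcases eq_or_ne r 1 with rfl | hr1
  · obtain ⟨i, rfl⟩ := Nat.exists_eq_succ_of_ne_zero (n := j) (by rintro rfl; exact hm1 rfl)
    exact ⟨i, 0, Nat.prime_three, by simp [pow_succ]⟩
  by_cases hrp : r.Prime
  · have hr_eq := hrp.eq_two_mul_three_pow_add_one (by rintro rfl; exact h2r dvd_rfl) hr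
    exact ⟨j, shapiro r - 1, hr_eq ▸ hrp, by rw [← hr_eq]⟩
  obtain ⟨q, ⟨s, rfl⟩, hq2, hqs⟩ := Nat.exists_dvd_of_not_prime2 (by omega) hrp
  have hs1 : s ≠ 1 := by rintro rfl; omega
  have hq := nine_mul_le_seven_mul_three_pow_shapiro (n := q) (by omega)
    (fun h => h2r (h.mul_right s)) (fun h => h3r (h.mul_right s))
  have hs := nine_mul_le_seven_mul_three_pow_shapiro hs1
    (fun h => h2r (h.mul_left q)) (fun h => h3r (h.mul_left q))
  rw [shapiro_mul (by omega) (right_ne_zero_of_mul hr0), pow_add] at hr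
  nlinarith [Nat.mul_le_mul hq hs]

lemma H_two_mul_three_pow_mul_prime {j b : ℕ} (hp : (2 * 3 ^ b + 1).Prime) :
    H (2 * 3 ^ j * (2 * 3 ^ b + 1)) = j + b + 2 := by
  rw [H_eq_shapiro_add_mod_two (by nlinarith [hp.two_le, Nat.one_le_pow j 3 (by norm_num)]),
    mul_assoc, Nat.mul_mod_right, shapiro_mul two_ne_zero (by positivity),
    shapiro_mul (by positivity) hp.ne_zero, shapiro_pow three_ne_zero,
    shapiro_two_mul_three_pow_add_one hp, shapiro_two, shapiro_three]
  ring

lemma exists_eq_two_mul_three_pow_mul_prime_of_H_eq {i n : ℕ} (hH : H n = i + 2)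
    (hlo : 4 * 3 ^ i < n) (hhi : n ≤ 2 * 3 ^ (i + 1)) :
    ∃ j b, (2 * 3 ^ b + 1).Prime ∧ j + b = i ∧ n = 2 * 3 ^ j * (2 * 3 ^ b + 1) := by
  have h3i : 0 < 3 ^ i := by positivity
  rw [H_eq_shapiro_add_mod_two (by omega)] at hH
  rw [pow_succ] at hhi
  obtain ⟨m, rfl | rfl⟩ := Nat.even_or_odd' n
  · obtain ⟨l, rfl | rfl⟩ := Nat.even_or_odd' m
    · have := three_pow_mul_le_of_two_pow_dvd (t := 2) (n := 2 * (2 * l)) (by omega)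
        ⟨l, by ring⟩
      rw [show shapiro (2 * (2 * l)) = i + 2 by omega, pow_add] at this
      omega
    · rw [Nat.mul_mod_right, add_zero, shapiro_mul two_ne_zero (by omega), shapiro_two] at hH
      have hlt : 2 * 3 ^ shapiro (2 * l + 1) < 3 * (2 * l + 1) := by
        rw [show shapiro (2 * l + 1) = i + 1 by omega, pow_succ]
        omega
      obtain ⟨j, b, hp, hm⟩ :=
        exists_eq_three_pow_mul_prime_of_two_mul_three_pow_lt (by omega) (by omega) hlt
      have := congrArg shapiro hm
      rw [shapiro_mul (by positivity) hp.ne_zero, shapiro_pow three_ne_zero,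
        shapiro_two_mul_three_pow_add_one hp, shapiro_three, mul_one] at this
      exact ⟨j, b, hp, by omega, by rw [hm, mul_assoc]⟩
  · have := le_three_pow_shapiro (n := 2 * m + 1) (by omega)
    rw [show shapiro (2 * m + 1) = i + 1 by omega, pow_succ] at this
    omega

theorem largest_elements_at_height_general (k : ℕ) (n : ℕ) :
    (H n = k ∧ 4 * 3 ^ (k - 2) < n ∧ n ≤ 2 * 3 ^ (k - 1)) ↔
    ∃ a : ℕ, 2 ≤ a ∧ a ≤ k ∧ (2 * 3 ^ (a - 2) + 1).Prime ∧
      n = 2 * 3 ^ (k - a) * (2 * 3 ^ (a - 2) + 1) := by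
  constructor
  · rintro ⟨hH, hlo, hhi⟩
    have hk : 2 ≤ k := by
      by_contra hk
      have : 0 < 3 ^ (k - 2) := by positivity
      rw [show k - 1 = 0 by omega] at hhi
      omega
    obtain ⟨i, rfl⟩ := Nat.exists_eq_add_of_le' hk
    simp only [Nat.add_sub_cancel, Nat.add_succ_sub_one] at hlo hhi
    obtain ⟨j, b, hp, rfl, rfl⟩ := exists_eq_two_mul_three_pow_mul_prime_of_H_eq hH hlo hhi
    exact ⟨b + 2, by omega, by omega, by simpa using hp, by simp [add_comm]⟩
  · rintro ⟨a, ha2, hak, hp, rfl⟩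
    obtain ⟨b, rfl⟩ := Nat.exists_eq_add_of_le' ha2
    obtain ⟨j, rfl⟩ := Nat.exists_eq_add_of_le hak
    simp only [Nat.add_sub_cancel, Nat.add_sub_cancel_left] at hp ⊢
    rw [show b + 2 + j - 2 = b + j by omega, show b + 2 + j - 1 = b + j + 1 by omega, pow_succ,
      pow_add]
    have h3b : 0 < 3 ^ b := by positivity
    have h3j : 0 < 3 ^ j := by positivity
    exact ⟨by rw [H_two_mul_three_pow_mul_prime hp]; ring, by nlinarith, by nlinarith⟩

theorem largest_elements_at_height (k : ℕ) (hk : 2 < k) (n : ℕ) :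
    (H n = k ∧ 4 * 3 ^ (k - 2) < n ∧ n ≤ 2 * 3 ^ (k - 1)) ↔
    ∃ a : ℕ, 2 ≤ a ∧ a ≤ k ∧ (2 * 3 ^ (a - 2) + 1).Prime ∧
      n = 2 * 3 ^ (k - a) * (2 * 3 ^ (a - 2) + 1) :=
  largest_elements_at_height_general k n
end
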